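/- arXiv:2111.02973 — 2 statements merged into one kernel-verified Lean document; each statement's English description precedes it below -/
import Mathlib

section
/- Let π be a permutation of {1,…,n} and let σ be any permutation of {1,…,n} that agrees with χ_e(π) on the set {1,…,n}∖RT (the complement of the set of run tops of π) and satisfies σ(i) ≤ i for every i in RT. Then the set of global ascents of π equals the set of global ascents of σ. -/
open Finset
open scoped Classical

variable {n : ℕ}

/-- `π` has a descent at (0-based) position `k`. -/
def IsDesc (π : Equiv.Perm (Fin n)) (k : ℕ) : Prop :=
  ∃ hk : k + 1 < n, π ⟨k + 1, hk⟩ < π ⟨k, Nat.lt_of_succ_lt hk⟩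

/-- Positions `i ≤ j` lie in the same descending run of `π`:
every step between them is a descent. -/
def SameRunLe (π : Equiv.Perm (Fin n)) (i j : Fin n) : Prop :=
  i ≤ j ∧ ∀ k : ℕ, i.val ≤ k → k < j.val → IsDesc π k

/-- The first position of the descending run containing position `p`. -/
noncomputable def runStartPos (π : Equiv.Perm (Fin n)) (p : Fin n) : Fin n :=
  (Finset.univ.filter fun a => SameRunLe π a p).min'
    ⟨p, Finset.mem_filter.mpr ⟨Finset.mem_univ p,
      le_refl p, fun k hk hk' => absurd hk' (Nat.not_lt.mpr hk)⟩⟩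

/-- The last position of the descending run containing position `p`. -/
noncomputable def runEndPos (π : Equiv.Perm (Fin n)) (p : Fin n) : Fin n :=
  (Finset.univ.filter fun b => SameRunLe π p b).max'
    ⟨p, Finset.mem_filter.mpr ⟨Finset.mem_univ p,
      le_refl p, fun k hk hk' => absurd hk' (Nat.not_lt.mpr hk)⟩⟩

/-- The run top (largest value) of the descending run of `π` containing the value `v`. -/
noncomputable def runTopVal (π : Equiv.Perm (Fin n)) (v : Fin n) : Fin n :=
  π (runStartPos π (π.symm v))

/-- The run bottom (smallest value) of the descending run of `π` containing the value `v`. -/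
noncomputable def runBotVal (π : Equiv.Perm (Fin n)) (v : Fin n) : Fin n :=
  π (runEndPos π (π.symm v))

/-- The set of run tops of `π`. -/
noncomputable def RT (π : Equiv.Perm (Fin n)) : Finset (Fin n) :=
  Finset.univ.filter fun v => runTopVal π v = v

/-- The set of run bottoms of `π`. -/
noncomputable def RB (π : Equiv.Perm (Fin n)) : Finset (Fin n) :=
  Finset.univ.filter fun v => runBotVal π v = v

/-- The descending run of `π` containing the value `v`, as a set of values. -/
noncomputable def runOf (π : Equiv.Perm (Fin n)) (v : Fin n) : Finset (Fin n) :=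
  Finset.univ.filter fun w => runStartPos π (π.symm w) = runStartPos π (π.symm v)

/-- The set of descending runs of `π`, each run regarded as a set of values. -/
noncomputable def runsSet (π : Equiv.Perm (Fin n)) : Finset (Finset (Fin n)) :=
  Finset.univ.image (runOf π)

/-- The set `31∗2(π)`: pairs `(i,j)` with `i+1 < j`, `π i > π j > π (i+1)`, and the run
bottom of the run containing `π i` (and `π (i+1)`) smaller than the run bottom of
the run containing `π j`. -/
noncomputable def Pat31s2 (π : Equiv.Perm (Fin n)) : Finset (Fin n × Fin n) :=
  Finset.univ.filter fun p => ∃ h : p.1.val + 1 < n,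
    p.1.val + 1 < p.2.val ∧ π p.2 < π p.1 ∧ π ⟨p.1.val + 1, h⟩ < π p.2 ∧
    runBotVal π (π p.1) < runBotVal π (π p.2)

/-- The multiset of descent views of `π`. -/
noncomputable def dvM (π : Equiv.Perm (Fin n)) : Multiset (Fin n) :=
  (Pat31s2 π).val.map fun p => π p.2

/-- Invisible inversions of `σ`: pairs `(i,j)` with `i < j` and `σ i > σ j > i`. -/
def invisibleInversions (σ : Equiv.Perm (Fin n)) : Finset (Fin n × Fin n) :=
  Finset.univ.filter fun p => p.1 < p.2 ∧ σ p.2 < σ p.1 ∧ p.1 < σ p.2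

/-- The multiset of invisible inversion bottoms of `σ`. -/
def invInvBottoms (σ : Equiv.Perm (Fin n)) : Multiset (Fin n) :=
  (invisibleInversions σ).val.map fun p => σ p.2

/-- The set of positions of weak deficiencies of `σ`. -/
def weakDefPos (σ : Equiv.Perm (Fin n)) : Finset (Fin n) :=
  Finset.univ.filter fun i => σ i ≤ i

/-- The set of values of weak deficiencies of `σ`. -/
def weakDefVals (σ : Equiv.Perm (Fin n)) : Finset (Fin n) :=
  (weakDefPos σ).image σ

/-- Global ascents of `π`, as 1-based indices `m ∈ {1,…,n}`: `π` restricted to the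
first `m` positions is a permutation of the smallest `m` values. -/
def globalAscents (π : Equiv.Perm (Fin n)) : Finset ℕ :=
  (Finset.Icc 1 n).filter fun m => ∀ i : Fin n, i.val < m → (π i).val < m

/-- The set of left-to-right maxima (as values) of `π`. -/
def lrMax (π : Equiv.Perm (Fin n)) : Finset (Fin n) :=
  Finset.univ.filter fun v => ∀ i : Fin n, i < π.symm v → π i < v

/-- The set of maximal elements of the cycles of `σ`. -/
noncomputable def cycleMaxes (σ : Equiv.Perm (Fin n)) : Finset (Fin n) :=
  Finset.univ.filter fun v => ∀ w : Fin n, σ.SameCycle v w → w ≤ v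

/-- The one-line notation of `π` (0-based values). -/
def oneLine (π : Equiv.Perm (Fin n)) : List ℕ :=
  (List.finRange n).map fun i => (π i : ℕ)

/-- Helper for splitting a list into maximal ascending runs. -/
def addRun (x : ℕ) : List (List ℕ) → List (List ℕ)
  | [] => [[x]]
  | [] :: rest => [x] :: rest
  | (y :: r) :: rest =>
      if x < y then (x :: y :: r) :: rest else [x] :: (y :: r) :: rest

/-- Split a list into its maximal ascending runs. -/
def splitAscRuns (l : List ℕ) : List (List ℕ) := l.foldr addRun []

/-- Sort the ascending runs of `l` in increasing order of their minimal (= first)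
elements and concatenate. -/
def runsortL (l : List ℕ) : List ℕ :=
  ((splitAscRuns l).mergeSort fun r s => decide (r.headI ≤ s.headI)).flatten

/-- The number of occurrences of the vincular pattern `13-2` in the word `l`:
pairs `(i,j)` with `i < j` and `l i < l j < l (i+1)`. -/
def occ132 (l : List ℕ) : ℕ :=
  ((Finset.range l.length ×ˢ Finset.range l.length).filter fun p =>
    p.1 < p.2 ∧ l.getD p.1 0 < l.getD p.2 0 ∧ l.getD p.2 0 < l.getD (p.1 + 1) 0).card

/-- The multiset of inversion bottoms of a bijection from `{1,…,n}∖RT` to `{1,…,n}∖RB`. -/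
noncomputable def invBottomsE (π : Equiv.Perm (Fin n))
    (f : {x : Fin n // x ∉ RT π} ≃ {x : Fin n // x ∉ RB π}) : Multiset (Fin n) :=
  ((Finset.univ :
      Finset ({x : Fin n // x ∉ RT π} × {x : Fin n // x ∉ RT π})).filter fun p =>
    (p.1 : Fin n) < (p.2 : Fin n) ∧ (f p.2 : Fin n) < (f p.1 : Fin n)).val.map
    fun p => (f p.2 : Fin n)

/-- The multiset of descent views of `π` which are not run bottoms. -/
noncomputable def dvNotRB (π : Equiv.Perm (Fin n)) : Multiset (Fin n) :=
  (dvM π).filter fun v => v ∉ RB π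

/-- `f` is the bijection `χ_e(π)`: its multiset of inversion bottoms is the multiset of
descent views of `π` which are not run bottoms. -/
def IsChiE (π : Equiv.Perm (Fin n))
    (f : {x : Fin n // x ∉ RT π} ≃ {x : Fin n // x ∉ RB π}) : Prop :=
  invBottomsE π f = dvNotRB π

/-- The graph of the partial bijection `f`. -/
noncomputable def chiEGraph (π : Equiv.Perm (Fin n))
    (f : {x : Fin n // x ∉ RT π} ≃ {x : Fin n // x ∉ RB π}) : Finset (Fin n × Fin n) :=
  Finset.univ.image fun x : {x : Fin n // x ∉ RT π} => ((x : Fin n), (f x : Fin n))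

/-- The number of cycles (orbits) of `σ`. -/
noncomputable def numCycles (σ : Equiv.Perm (Fin n)) : ℕ :=
  σ.cycleType.card + (Finset.univ.filter fun v => σ v = v).card

/-!
A descending run of `π` crosses the value `m` (bottom below `m`, top not) exactly when `m` is
not a global ascent: at a global ascent the first `m` positions carry the values below `m`, and
otherwise somewhere a value `≥ m` is immediately followed by a value `< m`. As run bottoms and
run tops correspond run by run, `m` is a global ascent of `π` iff there are at most as many
non-run-tops below `m` as non-run-bottoms below `m`.

If `m` is a global ascent of `σ`, then `χ_e(π)` maps the non-run-tops below `m` injectively to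
non-run-bottoms below `m`, which is this inequality. Conversely, let `m` be a global ascent of
`π`. Run tops `i < m` satisfy `σ i ≤ i`. Each occurrence `(i, j)` of `31∗2` with descent view
`v < m` yields the non-run-bottom `π i ∈ (v, m)`, distinct occurrences distinct ones, so
`χ_e(π)` has at most as many inversions with bottom `v` as there are non-run-bottoms in
`(v, m)`. A bijection `e` with this property between two linear orders, and lower sets `A`, `B`
with `#A ≤ #B`, maps `A` into `B`: otherwise take `y ∉ A` with `e y ∈ B` maximal; the elements
of `B` above `e y` come from `A`, and with an element of `A` sent outside `B` they give `y` one
inversion too many.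
-/

theorem Nat.exists_and_not_succ_of_le {p : ℕ → Prop} {a b : ℕ} (hab : a ≤ b) (ha : p a)
    (hb : ¬ p b) : ∃ k, a ≤ k ∧ k < b ∧ p k ∧ ¬ p (k + 1) := by
  induction b, hab using Nat.le_induction with
  | base => exact absurd ha hb
  | succ b hab ih =>
    by_cases hpb : p b
    · exact ⟨b, hab, b.lt_succ_self, hpb, hb⟩
    · obtain ⟨k, hak, hkb, hk⟩ := ih hpb
      exact ⟨k, hak, hkb.trans b.lt_succ_self, hk⟩

theorem Finset.card_filter_subtype {α : Type*} [Fintype α] (p q : α → Prop) [DecidablePred p]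
    [DecidablePred q] : #{x : Subtype p | q x} = #{x | p x ∧ q x} :=
  card_bij (fun x _ => x.val) (fun x hx => by simpa [x.2] using hx)
    (fun _ _ _ _ h => Subtype.ext h)
    (fun x hx => ⟨⟨x, (mem_filter.mp hx).2.1⟩, by simpa using (mem_filter.mp hx).2.2, rfl⟩)

theorem Finset.card_filter_subtype_notMem_add {α : Type*} [Fintype α] [DecidableEq α]
    (s : Finset α) (q : α → Prop) [DecidablePred q] :
    #{x : {x // x ∉ s} | q x} + #{x ∈ s | q x} = #{x | q x} := by
  rw [card_filter_subtype, ← card_filter_add_card_filter_not (s := {x | q x}) (· ∉ s)]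
  congr 2 <;> ext x <;> simp [and_comm]

theorem Equiv.mapsTo_of_card_inversions_le {α β : Type*} [Fintype α] [LinearOrder α]
    [Fintype β] [LinearOrder β] (e : α ≃ β) {p : α → Prop} {q : β → Prop}
    [DecidablePred p] [DecidablePred q] (hp : IsLowerSet {x | p x}) (hq : IsLowerSet {w | q w})
    (hcard : #{x | p x} ≤ #{w | q w})
    (hinv : ∀ y, q (e y) → #{x | x < y ∧ e y < e x} ≤ #{w | q w ∧ e y < w}) :
    Set.MapsTo e {x | p x} {w | q w} := by
  by_contra hmaps
  obtain ⟨x₀, hx₀p, hx₀q⟩ : ∃ x₀, p x₀ ∧ ¬ q (e x₀) := by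
    simpa [Set.MapsTo] using hmaps
  have hx₀mem : x₀ ∈ ({x | p x} : Finset α) := by simpa using hx₀p
  obtain ⟨y', hy'map, hy'erase⟩ := exists_mem_notMem_of_card_lt_card
    (s := ({x | p x} : Finset α).erase x₀) (t := ({w | q w} : Finset β).map e.symm.toEmbedding)
    (by rw [card_erase_of_mem hx₀mem, card_map]; have := card_pos.mpr ⟨x₀, hx₀mem⟩; omega)
  have hy'q : q (e y') := by simpa using hy'map
  have hy'p : ¬ p y' := fun h =>
    hy'erase (mem_erase.mpr ⟨by rintro rfl; exact hx₀q hy'q, by simpa⟩)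
  obtain ⟨y, hy, hmax⟩ := exists_max_image ({y | ¬ p y ∧ q (e y)} : Finset α) e
    ⟨y', by simpa using ⟨hy'p, hy'q⟩⟩
  obtain ⟨hyp, hyq⟩ : ¬ p y ∧ q (e y) := by simpa using hy
  have hlt : ∀ x, p x → x < y := fun x hx => lt_of_not_ge fun hyx => hyp (hp hyx hx)
  have hx₀ : x₀ ∈ ({x | x < y ∧ e y < e x} : Finset α) := by
    simpa using ⟨hlt x₀ hx₀p, lt_of_not_ge fun h => hx₀q (hq h hyq)⟩
  have hsmall :
      #{w | q w ∧ e y < w} ≤ #(({x | x < y ∧ e y < e x} : Finset α).erase x₀) := by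
    refine card_le_card_of_injOn e.symm (fun w hw => ?_) e.symm.injective.injOn
    obtain ⟨hwq, hyw⟩ : q w ∧ e y < w := by simpa using hw
    have hwp : p (e.symm w) := by
      by_contra hwp
      exact (hmax (e.symm w) (by simpa [hwp] using hwq)).not_gt (by simpa using hyw)
    have hne : e.symm w ≠ x₀ := by rintro rfl; exact hx₀q (by simpa using hwq)
    simpa [hne] using ⟨hlt _ hwp, hyw⟩
  have := hinv y hyq
  rw [card_erase_of_mem hx₀] at hsmall
  have := card_pos.mpr ⟨x₀, hx₀⟩
  omega

section Runs

variable {π : Equiv.Perm (Fin n)}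

theorem sameRunLe_rfl (π : Equiv.Perm (Fin n)) (p : Fin n) : SameRunLe π p p :=
  ⟨le_rfl, fun _ hk hk' => absurd hk' (not_lt.mpr hk)⟩

theorem SameRunLe.trans {a b c : Fin n} (hab : SameRunLe π a b) (hbc : SameRunLe π b c) :
    SameRunLe π a c :=
  ⟨hab.1.trans hbc.1, fun k hak hkc =>
    (lt_or_ge k b.val).elim (hab.2 k hak) fun hbk => hbc.2 k hbk hkc⟩

theorem SameRunLe.mono {a b c d : Fin n} (h : SameRunLe π a d) (hab : a ≤ b) (hbc : b ≤ c)
    (hcd : c ≤ d) : SameRunLe π b c :=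
  ⟨hbc, fun k hbk hkc => h.2 k (le_trans hab hbk) (lt_of_lt_of_le hkc hcd)⟩

theorem sameRunLe_of_isDesc {k : ℕ} (hk : k + 1 < n) (hd : IsDesc π k) :
    SameRunLe π ⟨k, Nat.lt_of_succ_lt hk⟩ ⟨k + 1, hk⟩ :=
  ⟨Nat.le_succ k, fun _ hkj hjk => Nat.le_antisymm (Nat.lt_succ_iff.mp hjk) hkj ▸ hd⟩

theorem SameRunLe.apply_le {a b : Fin n} (h : SameRunLe π a b) : π b ≤ π a := by
  suffices ∀ j, a.val ≤ j → ∀ hj : j < n, j ≤ b.val → π ⟨j, hj⟩ ≤ π a from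
    this b.val h.1 b.isLt le_rfl
  intro j haj
  induction j, haj using Nat.le_induction with
  | base => exact fun _ _ => le_rfl
  | succ j haj ih =>
    intro hj hjb
    obtain ⟨_, hdesc⟩ := h.2 j haj hjb
    exact hdesc.le.trans (ih _ (by omega))

theorem runStartPos_le_of {a p : Fin n} (h : SameRunLe π a p) : runStartPos π p ≤ a :=
  min'_le _ _ (mem_filter.mpr ⟨mem_univ a, h⟩)

theorem le_runEndPos_of {a p : Fin n} (h : SameRunLe π p a) : a ≤ runEndPos π p :=
  le_max' _ _ (mem_filter.mpr ⟨mem_univ a, h⟩)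

theorem sameRunLe_runStartPos (π : Equiv.Perm (Fin n)) (p : Fin n) :
    SameRunLe π (runStartPos π p) p :=
  (mem_filter.mp (min'_mem (univ.filter fun a => SameRunLe π a p) _)).2

theorem sameRunLe_runEndPos (π : Equiv.Perm (Fin n)) (p : Fin n) :
    SameRunLe π p (runEndPos π p) :=
  (mem_filter.mp (max'_mem (univ.filter fun b => SameRunLe π p b) _)).2

theorem runStartPos_le (π : Equiv.Perm (Fin n)) (p : Fin n) : runStartPos π p ≤ p :=
  runStartPos_le_of (sameRunLe_rfl π p)

theorem SameRunLe.runStartPos_eq {a b : Fin n} (h : SameRunLe π a b) :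
    runStartPos π b = runStartPos π a :=
  le_antisymm (runStartPos_le_of ((sameRunLe_runStartPos π a).trans h))
    (runStartPos_le_of ((sameRunLe_runStartPos π b).mono le_rfl (runStartPos_le_of h) h.1))

theorem SameRunLe.runEndPos_eq {a b : Fin n} (h : SameRunLe π a b) :
    runEndPos π a = runEndPos π b :=
  le_antisymm
    (le_runEndPos_of ((sameRunLe_runEndPos π a).mono h.1 (le_runEndPos_of h) le_rfl))
    (le_runEndPos_of (h.trans (sameRunLe_runEndPos π b)))

theorem runTopVal_apply (π : Equiv.Perm (Fin n)) (p : Fin n) :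
    runTopVal π (π p) = π (runStartPos π p) := by
  rw [runTopVal, Equiv.symm_apply_apply]

theorem runBotVal_apply (π : Equiv.Perm (Fin n)) (p : Fin n) :
    runBotVal π (π p) = π (runEndPos π p) := by
  rw [runBotVal, Equiv.symm_apply_apply]

theorem runBotVal_le (π : Equiv.Perm (Fin n)) (v : Fin n) : runBotVal π v ≤ v := by
  simpa [runBotVal] using (sameRunLe_runEndPos π (π.symm v)).apply_le

theorem runTopVal_runBotVal (π : Equiv.Perm (Fin n)) (v : Fin n) :
    runTopVal π (runBotVal π v) = runTopVal π v := by
  rw [runBotVal, runTopVal_apply, (sameRunLe_runEndPos π _).runStartPos_eq, runTopVal]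

theorem runBotVal_runTopVal (π : Equiv.Perm (Fin n)) (v : Fin n) :
    runBotVal π (runTopVal π v) = runBotVal π v := by
  rw [runTopVal, runBotVal_apply, (sameRunLe_runStartPos π _).runEndPos_eq, runBotVal]

theorem runBotVal_mem_RB (π : Equiv.Perm (Fin n)) (v : Fin n) : runBotVal π v ∈ RB π := by
  rw [RB, mem_filter, runBotVal, runBotVal_apply,
    ← (sameRunLe_runEndPos π _).runEndPos_eq]
  exact ⟨mem_univ _, rfl⟩

theorem runTopVal_mem_RT (π : Equiv.Perm (Fin n)) (v : Fin n) : runTopVal π v ∈ RT π := by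
  rw [RT, mem_filter, runTopVal, runTopVal_apply,
    ← (sameRunLe_runStartPos π _).runStartPos_eq]
  exact ⟨mem_univ _, rfl⟩

theorem runBotVal_runTopVal_of_mem_RB {b : Fin n} (hb : b ∈ RB π) :
    runBotVal π (runTopVal π b) = b := by
  rw [runBotVal_runTopVal]
  exact (mem_filter.mp hb).2

theorem runTopVal_runBotVal_of_mem_RT {t : Fin n} (ht : t ∈ RT π) :
    runTopVal π (runBotVal π t) = t := by
  rw [runTopVal_runBotVal]
  exact (mem_filter.mp ht).2

theorem injOn_runTopVal (π : Equiv.Perm (Fin n)) : Set.InjOn (runTopVal π) (RB π) :=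
  fun b₁ hb₁ b₂ hb₂ heq => by
    rw [← runBotVal_runTopVal_of_mem_RB hb₁, heq, runBotVal_runTopVal_of_mem_RB hb₂]

theorem injOn_runBotVal (π : Equiv.Perm (Fin n)) : Set.InjOn (runBotVal π) (RT π) :=
  fun t₁ ht₁ t₂ ht₂ heq => by
    rw [← runTopVal_runBotVal_of_mem_RT ht₁, heq, runTopVal_runBotVal_of_mem_RT ht₂]

theorem apply_notMem_RB_of_isDesc {i : Fin n} (hd : IsDesc π i.val) : π i ∉ RB π := by
  obtain ⟨hk, hlt⟩ := hd
  have hrun := sameRunLe_of_isDesc hk ⟨hk, hlt⟩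
  have hend : SameRunLe π ⟨i.val + 1, hk⟩ (runEndPos π i) :=
    (sameRunLe_runEndPos π i).mono hrun.1 (le_runEndPos_of hrun) le_rfl
  intro hRB
  have hfix : π (runEndPos π i) = π i := by
    rw [← runBotVal_apply]; exact (mem_filter.mp hRB).2
  exact (hfix ▸ hend.apply_le).not_gt hlt

end Runs

def IsGlobalAscent (π : Equiv.Perm (Fin n)) (m : ℕ) : Prop :=
  Set.MapsTo π {i | i.val < m} {i | i.val < m}

section GlobalAscents

variable {π : Equiv.Perm (Fin n)} {m : ℕ}

theorem IsGlobalAscent.symm (h : IsGlobalAscent π m) : IsGlobalAscent π.symm m :=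
  Equiv.Perm.perm_symm_mapsTo_of_mapsTo π h

theorem exists_descent_across_of_not_isGlobalAscent (h : ¬ IsGlobalAscent π m) :
    ∃ k, ∃ hk : k + 1 < n,
      m ≤ (π ⟨k, Nat.lt_of_succ_lt hk⟩).val ∧ (π ⟨k + 1, hk⟩).val < m := by
  obtain ⟨i, him, hmi⟩ : ∃ i : Fin n, i.val < m ∧ m ≤ (π i).val := by
    simpa [IsGlobalAscent, Set.MapsTo] using h
  obtain ⟨v, hvm, hmv⟩ : ∃ v : Fin n, v.val < m ∧ m ≤ (π.symm v).val := by
    simpa [IsGlobalAscent, Set.MapsTo] using mt IsGlobalAscent.symm (by simpa using h)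
  obtain ⟨k, -, hkj, ⟨hkn, hk⟩, hk1⟩ :=
    Nat.exists_and_not_succ_of_le (p := fun k => ∃ hk : k < n, m ≤ (π ⟨k, hk⟩).val)
      (a := i.val) (b := (π.symm v).val) (by omega) ⟨i.isLt, hmi⟩ (by simpa using hvm)
  have hk1n : k + 1 < n := by have := (π.symm v).isLt; omega
  exact ⟨k, hk1n, hk, by simpa [hk1n] using hk1⟩

theorem isGlobalAscent_iff_forall_runTopVal_lt :
    IsGlobalAscent π m ↔ ∀ b ∈ RB π, b.val < m → (runTopVal π b).val < m := by
  refine ⟨fun hπ b _ hbm => ?_, fun h => ?_⟩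
  · exact hπ (Nat.lt_of_le_of_lt (runStartPos_le π _) (hπ.symm hbm))
  · by_contra hπ
    obtain ⟨k, hk, hkm, hk1m⟩ := exists_descent_across_of_not_isGlobalAscent hπ
    have hrun := sameRunLe_of_isDesc (π := π) hk ⟨hk, Fin.lt_def.mpr (by omega)⟩
    have htop := h _ (runBotVal_mem_RB π _) (Nat.lt_of_le_of_lt (runBotVal_le π _) hk1m)
    rw [runTopVal_runBotVal, runTopVal_apply, hrun.runStartPos_eq] at htop
    exact (Nat.lt_of_lt_of_le htop hkm).not_ge (sameRunLe_runStartPos π _).apply_le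

theorem forall_runTopVal_lt_iff_card_le :
    (∀ b ∈ RB π, b.val < m → (runTopVal π b).val < m) ↔
      #{b ∈ RB π | b.val < m} ≤ #{t ∈ RT π | t.val < m} := by
  refine ⟨fun h => ?_, fun hcard b hb hbm => ?_⟩
  · refine card_le_card_of_injOn (runTopVal π) (fun b hb => ?_)
      ((injOn_runTopVal π).mono (filter_subset _ _))
    obtain ⟨hb, hbm⟩ := mem_filter.mp hb
    exact mem_filter.mpr ⟨runTopVal_mem_RT π b, h b hb hbm⟩
  · have hsub : {t ∈ RT π | t.val < m}.image (runBotVal π) ⊆ {b ∈ RB π | b.val < m} := by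
      intro b hb
      obtain ⟨t, ht, rfl⟩ := mem_image.mp hb
      exact mem_filter.mpr ⟨runBotVal_mem_RB π t,
        Nat.lt_of_le_of_lt (runBotVal_le π t) (mem_filter.mp ht).2⟩
    have hinj := (injOn_runBotVal π).mono (filter_subset (fun t => t.val < m) _)
    have heq := eq_of_subset_of_card_le hsub (by rwa [card_image_of_injOn hinj])
    obtain ⟨t, ht, rfl⟩ := mem_image.mp (heq ▸ mem_filter.mpr ⟨hb, hbm⟩)
    rw [runTopVal_runBotVal_of_mem_RT (mem_filter.mp ht).1]
    exact (mem_filter.mp ht).2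

theorem isGlobalAscent_iff_card_le :
    IsGlobalAscent π m ↔
      #{x : {x // x ∉ RT π} | x.val.val < m} ≤ #{x : {x // x ∉ RB π} | x.val.val < m} := by
  rw [isGlobalAscent_iff_forall_runTopVal_lt, forall_runTopVal_lt_iff_card_le]
  have hRT := card_filter_subtype_notMem_add (RT π) fun x => x.val < m
  have hRB := card_filter_subtype_notMem_add (RB π) fun x => x.val < m
  omega

end GlobalAscents

theorem IsGlobalAscent.count_dvNotRB_le {π : Equiv.Perm (Fin n)} {m : ℕ}
    (hπ : IsGlobalAscent π m) {v : Fin n} (hv : v ∉ RB π) (hvm : v.val < m) :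
    (dvNotRB π).count v ≤ #{w | w ∉ RB π ∧ w.val < m ∧ v < w} := by
  rw [dvNotRB, Multiset.count_filter_of_pos (p := (· ∉ RB π)) hv, dvM, Multiset.count_map,
    ← filter_val, ← card_def]
  refine card_le_card_of_injOn (fun p => π p.1) (fun p hp => ?_) (fun p hp q hq h => ?_)
  · obtain ⟨hpat, rfl⟩ := mem_filter.mp hp
    obtain ⟨hk, hgap, hlt, hsucc, -⟩ := (mem_filter.mp hpat).2
    have hdesc : IsDesc π p.1.val := ⟨hk, by simpa using hsucc.trans hlt⟩
    have hjm : p.2.val < m := by simpa using hπ.symm hvm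
    exact mem_filter.mpr
      ⟨mem_univ _, apply_notMem_RB_of_isDesc hdesc, hπ (show p.1.val < m by omega), hlt⟩
  · obtain ⟨-, hp⟩ := mem_filter.mp hp
    obtain ⟨-, hq⟩ := mem_filter.mp hq
    exact Prod.ext (π.injective h) (π.injective (hp.symm.trans hq))

theorem count_invBottomsE (π : Equiv.Perm (Fin n))
    (f : {x : Fin n // x ∉ RT π} ≃ {x : Fin n // x ∉ RB π})
    (y : {x : Fin n // x ∉ RT π}) :
    (invBottomsE π f).count (f y : Fin n) = #{x | x < y ∧ f y < f x} := by
  rw [invBottomsE, Multiset.count_map, ← filter_val, ← card_def]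
  refine card_nbij' Prod.fst (fun x => (x, y)) (fun p hp => ?_) (fun x hx => ?_)
    (fun p hp => ?_) (fun x _ => rfl)
  all_goals simp only [coe_filter, mem_filter, mem_univ, true_and, Set.mem_ofPred_eq] at *
  · obtain ⟨⟨hlt, hinv⟩, hy⟩ := hp
    obtain rfl : p.2 = y := f.injective (Subtype.ext hy.symm)
    exact ⟨hlt, hinv⟩
  · exact ⟨hx, trivial⟩
  · exact Prod.ext rfl (f.injective (Subtype.ext hp.2))

theorem IsChiE.card_inversions_le {π : Equiv.Perm (Fin n)}
    {f : {x : Fin n // x ∉ RT π} ≃ {x : Fin n // x ∉ RB π}} (hf : IsChiE π f) {m : ℕ}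
    (hπ : IsGlobalAscent π m) (y : {x : Fin n // x ∉ RT π}) (hy : (f y).val.val < m) :
    #{x | x < y ∧ f y < f x} ≤
      #{w : {x : Fin n // x ∉ RB π} | w.val.val < m ∧ f y < w} := by
  rw [← count_invBottomsE, hf]
  exact (hπ.count_dvNotRB_le (f y).2 hy).trans_eq (card_filter_subtype _ _).symm

/-- any permutation agreeing with `χ_e(π)` on the complement of the run
tops whose other values are weak deficiencies has the same global ascents as `π`. -/
theorem stmt7 (n : ℕ) (π σ : Equiv.Perm (Fin n))
    (f : {x : Fin n // x ∉ RT π} ≃ {x : Fin n // x ∉ RB π}) (hf : IsChiE π f)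
    (hagree : ∀ x : Fin n, ∀ hx : x ∉ RT π, σ x = (f ⟨x, hx⟩ : Fin n))
    (hdef : ∀ i : Fin n, i ∈ RT π → σ i ≤ i) :
    globalAscents π = globalAscents σ := by
  ext m
  simp only [globalAscents, mem_filter]
  refine and_congr_right fun _ => ?_
  change IsGlobalAscent π m ↔ IsGlobalAscent σ m
  have hσ : IsGlobalAscent σ m ↔ Set.MapsTo f {x | x.val.val < m} {w | w.val.val < m} := by
    refine ⟨fun h x hx => ?_, fun h i hi => ?_⟩
    · rw [Set.mem_ofPred_eq, ← hagree]; exact h hx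
    · by_cases hiRT : i ∈ RT π
      · exact Nat.lt_of_le_of_lt (hdef i hiRT) hi
      · rw [Set.mem_ofPred_eq, hagree i hiRT]; exact h (show _ < m from hi)
  rw [hσ]
  constructor
  · intro hπ
    exact f.mapsTo_of_card_inversions_le (fun _ _ hba ha => Nat.lt_of_le_of_lt hba ha)
      (fun _ _ hba ha => Nat.lt_of_le_of_lt hba ha) (isGlobalAscent_iff_card_le.mp hπ)
      (hf.card_inversions_le hπ)
  · intro hmaps
    exact isGlobalAscent_iff_card_le.mpr (card_le_card_of_injOn f
      (fun x hx => by simpa using hmaps (by simpa using hx)) f.injective.injOn)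
end

section
/- For every positive integer n and every k ≥ 0, the number of permutations π of {1,…,n} having exactly k left-to-right maxima equals the number of permutations σ of {1,…,n} having exactly k cycles; moreover, there is a bijection χ from permutations of {1,…,n} to themselves under which, for every π, the set of left-to-right maxima of π equals the set of maximal elements of the cycles of χ(π), the set of run tops of π equals the set of weak deficiency positions of χ(π), and the set of run bottoms of π equals the set of weak deficiency values of χ(π). -/
open Finset
open scoped Classical

variable {n : ℕ}

/-!
Cut the positions of `π` into segments, each starting at a left-to-right maximum and running
up to the next one; equivalently, two positions lie in the same segment when they have the same
prefix maximum. The permutation `s` of positions that sends the start of a segment to its end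
and every other position to its predecessor has exactly the segments as cycles, and we take
`χ(π) = π s π⁻¹`. The cycles of `χ(π)` are then the value sets of the segments, whose maxima are
the left-to-right maxima of `π`; `π (s p) ≤ π p` exactly when `p` starts a descending run, and `s`
maps run starts onto run ends. `π` is recovered from `χ(π)` position by position: the next
position starts a new segment iff `χ(π)` closes the current cycle; its value is then the least
cycle maximum above all values seen so far, and otherwise it is `χ(π)⁻¹` of the previous value.
-/

open Equiv Function

theorem Equiv.Perm.SameCycle.apply_eq_of_forall_apply_self {α β : Type*} {f : Perm α}
    {g : α → β} (hg : ∀ x, g (f x) = g x) {x y : α} (h : f.SameCycle x y) : g x = g y := by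
  obtain ⟨k, rfl⟩ := h
  symm
  induction k using Int.induction_on with
  | zero => rfl
  | succ k ih => rw [add_comm, zpow_add, zpow_one, Perm.mul_apply, hg, ih]
  | pred k ih =>
    rw [← ih, ← hg ((f ^ (-(k : ℤ) - 1)) x), ← Perm.mul_apply, ← zpow_one_add]
    ring_nf

section Records

variable (π : Perm (Fin n))

theorem apply_mem_lrMax_iff {i : Fin n} : π i ∈ lrMax π ↔ ∀ j < i, π j < π i := by
  simp [lrMax]

theorem apply_mem_lrMax_of_val_eq_zero {i : Fin n} (h : i.val = 0) : π i ∈ lrMax π :=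
  (apply_mem_lrMax_iff π).2 fun j hj => absurd hj (by simp [Fin.lt_def, h])

def prefixMax (i : Fin n) : Fin n :=
  ((Iic i).image π).max' (nonempty_Iic.image π)

def lastRecord (i : Fin n) : Fin n := π.symm (prefixMax π i)

variable {π}

@[simp]
theorem apply_lastRecord (i : Fin n) : π (lastRecord π i) = prefixMax π i :=
  π.apply_symm_apply _

theorem le_prefixMax {i j : Fin n} (h : j ≤ i) : π j ≤ prefixMax π i :=
  le_max' _ _ (mem_image_of_mem π (mem_Iic.2 h))

theorem prefixMax_le {i v : Fin n} (h : ∀ j ≤ i, π j ≤ v) : prefixMax π i ≤ v :=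
  max'_le _ _ _ fun _ hw => by
    obtain ⟨j, hj, rfl⟩ := mem_image.1 hw
    exact h j (mem_Iic.1 hj)

theorem lastRecord_le (i : Fin n) : lastRecord π i ≤ i := by
  obtain ⟨j, hj, hji⟩ := mem_image.1 (max'_mem ((Iic i).image π) (nonempty_Iic.image π))
  rw [lastRecord, prefixMax, ← hji, π.symm_apply_apply]
  exact mem_Iic.1 hj

theorem prefixMax_mono : Monotone (prefixMax π) := fun _ _ hij =>
  prefixMax_le fun _ hj => le_prefixMax (hj.trans hij)

theorem prefixMax_eq_of_le {i j : Fin n} (h₁ : lastRecord π i ≤ j) (h₂ : j ≤ i) :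
    prefixMax π j = prefixMax π i :=
  le_antisymm (prefixMax_mono h₂) (apply_lastRecord (π := π) i ▸ le_prefixMax h₁)

theorem prefixMax_lastRecord (i : Fin n) : prefixMax π (lastRecord π i) = prefixMax π i :=
  prefixMax_eq_of_le le_rfl (lastRecord_le i)

theorem prefixMax_eq_iff {i : Fin n} : prefixMax π i = π i ↔ π i ∈ lrMax π := by
  rw [apply_mem_lrMax_iff]
  refine ⟨fun h j hj => lt_of_le_of_ne (h ▸ le_prefixMax hj.le) (π.injective.ne hj.ne),
    fun h => ?_⟩
  refine le_antisymm (prefixMax_le fun j hj => ?_) (le_prefixMax le_rfl)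
  rcases hj.lt_or_eq with hj | rfl
  exacts [(h j hj).le, le_rfl]

theorem lastRecord_eq_self_iff {i : Fin n} : lastRecord π i = i ↔ π i ∈ lrMax π := by
  rw [lastRecord, π.symm_apply_eq, prefixMax_eq_iff]

theorem apply_lastRecord_mem_lrMax (i : Fin n) : π (lastRecord π i) ∈ lrMax π := by
  rw [← prefixMax_eq_iff, prefixMax_lastRecord, apply_lastRecord]

theorem prefixMax_lt_of_lt {i j : Fin n} (hi : π i ∈ lrMax π) (hj : j < i) :
    prefixMax π j < π i := by
  rw [← apply_lastRecord]
  exact (apply_mem_lrMax_iff π).1 hi _ ((lastRecord_le j).trans_lt hj)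

theorem val_ne_zero_of_apply_notMem_lrMax {i : Fin n} (hi : π i ∉ lrMax π) : i.val ≠ 0 :=
  fun h => hi (apply_mem_lrMax_of_val_eq_zero π h)

theorem prefixMax_eq_of_apply_notMem_lrMax {i q : Fin n} (hi : π i ∉ lrMax π)
    (hq : q.val + 1 = i.val) : prefixMax π q = prefixMax π i := by
  have hlt := Fin.lt_def.1 ((lastRecord_le i).lt_of_ne (mt lastRecord_eq_self_iff.1 hi))
  exact prefixMax_eq_of_le (Fin.le_def.2 (by omega)) (Fin.le_def.2 (by omega))

theorem prefixMax_congr {π π' : Perm (Fin n)} {i : Fin n} (h : ∀ j ≤ i, π j = π' j) :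
    prefixMax π i = prefixMax π' i := by
  simp only [prefixMax]
  congr 1
  exact image_congr fun j hj => h j (mem_Iic.1 hj)

end Records

section Segments

variable {π : Perm (Fin n)}

variable (π) in
def segEnd (i : Fin n) : Fin n :=
  (univ.filter fun j => prefixMax π j = prefixMax π i).max' ⟨i, by simp⟩

theorem prefixMax_segEnd (i : Fin n) : prefixMax π (segEnd π i) = prefixMax π i :=
  (mem_filter.1 (max'_mem (univ.filter fun j => prefixMax π j = prefixMax π i) _)).2

theorem le_segEnd {i j : Fin n} (h : prefixMax π j = prefixMax π i) : j ≤ segEnd π i :=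
  le_max' _ _ (by simpa using h)

theorem segEnd_congr {i j : Fin n} (h : prefixMax π i = prefixMax π j) :
    segEnd π i = segEnd π j := by
  simp only [segEnd, h]

theorem segEnd_eq_self_iff {i j : Fin n} (hij : i.val + 1 = j.val) :
    segEnd π i = i ↔ π j ∈ lrMax π := by
  constructor
  · intro he
    by_contra hj
    have := le_segEnd (prefixMax_eq_of_apply_notMem_lrMax hj hij).symm
    rw [he, Fin.le_def] at this
    omega
  · intro hj
    refine le_antisymm (not_lt.1 fun hlt => ?_) (le_segEnd rfl)
    rw [Fin.lt_def] at hlt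
    have hle : π j ≤ prefixMax π i :=
      prefixMax_segEnd (π := π) i ▸ le_prefixMax (Fin.le_def.2 (by omega))
    exact hle.not_gt (prefixMax_lt_of_lt hj (by rw [Fin.lt_def]; omega))

theorem apply_segEnd_lt {i j : Fin n} (hj : (segEnd π i).val + 1 = j.val) :
    π (segEnd π i) < π j :=
  (apply_mem_lrMax_iff π).1
    ((segEnd_eq_self_iff hj).1 (segEnd_congr (prefixMax_segEnd i)))
    _ (by rw [Fin.lt_def]; omega)

/-- Only meaningful for `i ≠ 0`: `prevPos 0 = 0`. -/
def prevPos (i : Fin n) : Fin n := ⟨i.val - 1, by omega⟩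

theorem prevPos_val_add_one {i : Fin n} (h : i.val ≠ 0) : (prevPos i).val + 1 = i.val := by
  simp only [prevPos]; omega

theorem prevPos_lt {i : Fin n} (h : i.val ≠ 0) : prevPos i < i := by
  rw [Fin.lt_def, ← prevPos_val_add_one h]; omega

variable (π) in
def segShift (i : Fin n) : Fin n :=
  if π i ∈ lrMax π then segEnd π i else prevPos i

theorem segShift_of_mem {i : Fin n} (hi : π i ∈ lrMax π) : segShift π i = segEnd π i :=
  if_pos hi

theorem segShift_of_notMem {i : Fin n} (hi : π i ∉ lrMax π) : segShift π i = prevPos i :=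
  if_neg hi

theorem prefixMax_segShift (i : Fin n) : prefixMax π (segShift π i) = prefixMax π i := by
  by_cases hi : π i ∈ lrMax π
  · rw [segShift_of_mem hi, prefixMax_segEnd]
  · rw [segShift_of_notMem hi, prefixMax_eq_of_apply_notMem_lrMax hi
      (prevPos_val_add_one (val_ne_zero_of_apply_notMem_lrMax hi))]

theorem segShift_injective : Injective (segShift π) := by
  intro i j h
  have hpm : prefixMax π i = prefixMax π j := by
    rw [← prefixMax_segShift i, h, prefixMax_segShift]
  by_cases hi : π i ∈ lrMax π <;> by_cases hj : π j ∈ lrMax π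
  · rw [← lastRecord_eq_self_iff.2 hi, ← lastRecord_eq_self_iff.2 hj, lastRecord, lastRecord,
      hpm]
  · rw [segShift_of_mem hi, segShift_of_notMem hj] at h
    exact ((prevPos_lt (val_ne_zero_of_apply_notMem_lrMax hj)).not_ge
      (h ▸ le_segEnd hpm.symm)).elim
  · rw [segShift_of_notMem hi, segShift_of_mem hj] at h
    exact ((prevPos_lt (val_ne_zero_of_apply_notMem_lrMax hi)).not_ge
      (h ▸ le_segEnd hpm)).elim
  · rw [segShift_of_notMem hi, segShift_of_notMem hj] at h
    have hi' := prevPos_val_add_one (val_ne_zero_of_apply_notMem_lrMax hi)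
    have hj' := prevPos_val_add_one (val_ne_zero_of_apply_notMem_lrMax hj)
    rw [h] at hi'
    exact Fin.ext (hi'.symm.trans hj')

end Segments

section Chi

variable (π : Perm (Fin n))

noncomputable def segShiftPerm : Perm (Fin n) :=
  Equiv.ofBijective (segShift π) segShift_injective.bijective_of_finite

/-- The cycle of `chi π` through a left-to-right maximum `π r` is
`(π r, π e, π (e - 1), …, π (r + 1))`, where `e = segEnd π r`. -/
noncomputable def chi : Perm (Fin n) := π * segShiftPerm π * π⁻¹

variable {π}

theorem segShiftPerm_apply (i : Fin n) : segShiftPerm π i = segShift π i := rfl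

theorem chi_apply_apply (i : Fin n) : chi π (π i) = π (segShift π i) := by
  simp [chi, segShiftPerm]

theorem sameCycle_segShiftPerm_lastRecord (i : Fin n) :
    (segShiftPerm π).SameCycle i (lastRecord π i) := by
  induction i using WellFoundedLT.induction with
  | _ i ih =>
    by_cases hi : π i ∈ lrMax π
    · rw [lastRecord_eq_self_iff.2 hi]
    · have hi0 := val_ne_zero_of_apply_notMem_lrMax hi
      have hlast : lastRecord π (prevPos i) = lastRecord π i := by
        rw [lastRecord, lastRecord,
          prefixMax_eq_of_apply_notMem_lrMax hi (prevPos_val_add_one hi0)]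
      rw [← Perm.sameCycle_apply_left, segShiftPerm_apply, segShift_of_notMem hi, ← hlast]
      exact ih _ (prevPos_lt hi0)

theorem sameCycle_segShiftPerm_iff {i j : Fin n} :
    (segShiftPerm π).SameCycle i j ↔ prefixMax π i = prefixMax π j := by
  refine ⟨Perm.SameCycle.apply_eq_of_forall_apply_self prefixMax_segShift, fun h => ?_⟩
  have hlast : lastRecord π i = lastRecord π j := by rw [lastRecord, lastRecord, h]
  exact (sameCycle_segShiftPerm_lastRecord i).trans
    (hlast ▸ (sameCycle_segShiftPerm_lastRecord j).symm)

theorem sameCycle_chi_iff {i j : Fin n} :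
    (chi π).SameCycle (π i) (π j) ↔ prefixMax π i = prefixMax π j := by
  simp [chi, Perm.sameCycle_conj, sameCycle_segShiftPerm_iff]

theorem lrMax_eq_cycleMaxes_chi : lrMax π = cycleMaxes (chi π) := by
  ext v
  obtain ⟨i, rfl⟩ := π.surjective v
  rw [cycleMaxes, mem_filter, ← prefixMax_eq_iff, π.surjective.forall]
  simp only [mem_univ, true_and, sameCycle_chi_iff]
  constructor
  · intro hi j hij
    exact hi ▸ hij ▸ le_prefixMax le_rfl
  · intro h
    refine le_antisymm ?_ (le_prefixMax le_rfl)
    simpa using h (lastRecord π i) (prefixMax_lastRecord i).symm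

end Chi

section Runs

variable {π : Perm (Fin n)}

theorem not_isDesc_iff {p q : Fin n} (h : q.val + 1 = p.val) :
    ¬ IsDesc π q.val ↔ π q < π p := by
  obtain ⟨_, hp⟩ := p
  subst h
  refine ⟨fun hd => lt_of_le_of_ne (not_lt.1 fun hlt => hd ⟨_, hlt⟩) ?_,
    fun hlt ⟨_, hd⟩ => hlt.not_gt hd⟩
  exact π.injective.ne (Fin.ne_of_val_ne (by simp))

theorem sameRunLe_iff_isDesc {p q : Fin n} (h : q.val + 1 = p.val) :
    SameRunLe π q p ↔ IsDesc π q.val := by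
  refine ⟨fun hqp => hqp.2 q.val le_rfl (by omega), fun hd => ⟨Fin.le_def.2 (by omega), ?_⟩⟩
  intro k hk hk'
  obtain rfl : k = q.val := by omega
  exact hd

theorem runStartPos_eq_self_iff {p : Fin n} :
    runStartPos π p = p ↔ ∀ q : Fin n, q.val + 1 = p.val → π q < π p := by
  refine (min'_eq_iff _ _ p).trans ?_
  simp only [mem_filter, mem_univ, true_and]
  refine (and_iff_right ⟨le_rfl, fun k hk hk' => absurd hk' (not_lt.2 hk)⟩).trans
    ⟨fun h q hq => (not_isDesc_iff hq).1 fun hd => ?_, fun h a ha => not_lt.1 fun hlt => ?_⟩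
  · have := Fin.le_def.1 (h q ((sameRunLe_iff_isDesc hq).2 hd))
    omega
  · rw [Fin.lt_def] at hlt
    have hq := prevPos_val_add_one (i := p) (by omega)
    exact (not_isDesc_iff hq).2 (h _ hq) (ha.2 _ (by omega) (by omega))

theorem runEndPos_eq_self_iff {p : Fin n} :
    runEndPos π p = p ↔ ∀ q : Fin n, p.val + 1 = q.val → π p < π q := by
  refine (max'_eq_iff _ _ p).trans ?_
  simp only [mem_filter, mem_univ, true_and]
  refine (and_iff_right ⟨le_rfl, fun k hk hk' => absurd hk' (not_lt.2 hk)⟩).trans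
    ⟨fun h q hq => (not_isDesc_iff hq).1 fun hd => ?_, fun h b hb => not_lt.1 fun hlt => ?_⟩
  · have := Fin.le_def.1 (h q ((sameRunLe_iff_isDesc hq).2 hd))
    omega
  · rw [Fin.lt_def] at hlt
    have hq : p.val + 1 < n := by omega
    exact (not_isDesc_iff (p := ⟨p.val + 1, hq⟩) rfl).2 (h _ rfl) (hb.2 _ le_rfl (by omega))

theorem apply_mem_RT_iff {p : Fin n} :
    π p ∈ RT π ↔ ∀ q : Fin n, q.val + 1 = p.val → π q < π p := by
  rw [RT, mem_filter, runTopVal, π.symm_apply_apply, π.injective.eq_iff,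
    runStartPos_eq_self_iff]
  exact and_iff_right (mem_univ _)

theorem apply_mem_RB_iff {p : Fin n} :
    π p ∈ RB π ↔ ∀ q : Fin n, p.val + 1 = q.val → π p < π q := by
  rw [RB, mem_filter, runBotVal, π.symm_apply_apply, π.injective.eq_iff,
    runEndPos_eq_self_iff]
  exact and_iff_right (mem_univ _)

end Runs

section WeakDeficiencies

variable {π : Perm (Fin n)}

theorem apply_mem_RT_of_mem_lrMax {p : Fin n} (hp : π p ∈ lrMax π) : π p ∈ RT π :=
  apply_mem_RT_iff.2 fun q hq => (apply_mem_lrMax_iff π).1 hp q (Fin.lt_def.2 (by omega))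

theorem apply_segShift_le_iff {p : Fin n} : π (segShift π p) ≤ π p ↔ π p ∈ RT π := by
  by_cases hp : π p ∈ lrMax π
  · refine iff_of_true ?_ (apply_mem_RT_of_mem_lrMax hp)
    calc π (segShift π p) ≤ prefixMax π (segShift π p) := le_prefixMax le_rfl
      _ = π p := by rw [prefixMax_segShift, prefixMax_eq_iff.2 hp]
  · have hp0 := val_ne_zero_of_apply_notMem_lrMax hp
    rw [segShift_of_notMem hp, apply_mem_RT_iff]
    refine ⟨fun h q hq => ?_, fun h => (h _ (prevPos_val_add_one hp0)).le⟩
    obtain rfl : q = prevPos p := Fin.ext (by have := prevPos_val_add_one hp0; omega)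
    exact lt_of_le_of_ne h (π.injective.ne (prevPos_lt hp0).ne)

theorem apply_segShift_mem_RB_iff {p : Fin n} : π (segShift π p) ∈ RB π ↔ π p ∈ RT π := by
  by_cases hp : π p ∈ lrMax π
  · rw [segShift_of_mem hp]
    exact iff_of_true (apply_mem_RB_iff.2 fun _ hq => apply_segEnd_lt hq)
      (apply_mem_RT_of_mem_lrMax hp)
  · have hp0 := prevPos_val_add_one (val_ne_zero_of_apply_notMem_lrMax hp)
    rw [segShift_of_notMem hp, apply_mem_RB_iff, apply_mem_RT_iff]
    constructor
    · intro h q hq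
      obtain rfl : q = prevPos p := Fin.ext (by omega)
      exact h p hp0
    · intro h q hq
      obtain rfl : q = p := Fin.ext (by omega)
      exact h _ hp0

theorem weakDefPos_chi : weakDefPos (chi π) = RT π := by
  ext v
  obtain ⟨p, rfl⟩ := π.surjective v
  rw [weakDefPos, mem_filter, chi_apply_apply, apply_segShift_le_iff]
  exact and_iff_right (mem_univ _)

theorem weakDefVals_chi : weakDefVals (chi π) = RB π := by
  ext v
  obtain ⟨p, rfl⟩ := (chi π * π).surjective v
  rw [Perm.mul_apply, weakDefVals, weakDefPos_chi, (chi π).injective.mem_finset_image,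
    chi_apply_apply, apply_segShift_mem_RB_iff]

end WeakDeficiencies

section Injectivity

variable {π π' : Perm (Fin n)}

theorem apply_mem_lrMax_iff_chi {i q : Fin n} (hq : q.val + 1 = i.val) :
    π i ∈ lrMax π ↔ chi π (prefixMax π q) = π q := by
  rw [← apply_lastRecord, chi_apply_apply, segShift_of_mem (apply_lastRecord_mem_lrMax q),
    π.injective.eq_iff, segEnd_congr (prefixMax_lastRecord q), segEnd_eq_self_iff hq]

theorem apply_le_of_mem_lrMax {i : Fin n} {v : Fin n} (hi : π i ∈ lrMax π) (hv : v ∈ lrMax π)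
    (hlt : ∀ j < i, π j < v) : π i ≤ v := by
  obtain ⟨p, rfl⟩ := π.surjective v
  rcases lt_trichotomy p i with h | rfl | h
  exacts [absurd (hlt p h) (lt_irrefl _), le_rfl, ((apply_mem_lrMax_iff π).1 hv i h).le]

theorem apply_eq_of_chi_eq (hchi : chi π = chi π') {i : Fin n} (hlt : ∀ j < i, π j = π' j) :
    π i = π' i := by
  have hrec : π i ∈ lrMax π ↔ π' i ∈ lrMax π' := by
    by_cases h0 : i.val = 0
    · exact iff_of_true (apply_mem_lrMax_of_val_eq_zero π h0)
        (apply_mem_lrMax_of_val_eq_zero π' h0)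
    · have hq := prevPos_val_add_one h0
      have hle : ∀ j ≤ prevPos i, π j = π' j := fun j hj => hlt j (hj.trans_lt (prevPos_lt h0))
      rw [apply_mem_lrMax_iff_chi hq, apply_mem_lrMax_iff_chi hq, hchi, prefixMax_congr hle,
        hle _ le_rfl]
  by_cases hi : π i ∈ lrMax π
  · have hi' := hrec.1 hi
    have hmax : lrMax π = lrMax π' := by
      rw [lrMax_eq_cycleMaxes_chi, lrMax_eq_cycleMaxes_chi, hchi]
    refine le_antisymm (apply_le_of_mem_lrMax hi (hmax ▸ hi') fun j hj => ?_)
      (apply_le_of_mem_lrMax hi' (hmax ▸ hi) fun j hj => ?_)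
    · exact hlt j hj ▸ (apply_mem_lrMax_iff π').1 hi' j hj
    · exact (hlt j hj).symm ▸ (apply_mem_lrMax_iff π).1 hi j hj
  · have hi' := mt hrec.2 hi
    have hp := prevPos_lt (val_ne_zero_of_apply_notMem_lrMax hi)
    apply (chi π).injective
    rw [chi_apply_apply, segShift_of_notMem hi, hchi, chi_apply_apply, segShift_of_notMem hi',
      hlt _ hp]

theorem chi_injective : Injective (chi : Perm (Fin n) → Perm (Fin n)) := by
  intro π π' hchi
  ext i
  induction i using WellFoundedLT.induction with
  | _ i ih => exact congrArg Fin.val (apply_eq_of_chi_eq hchi fun j hj => Fin.ext (ih j hj))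

end Injectivity

section CycleMaxes

variable (σ : Perm (Fin n))

theorem mem_cycleMaxes_of_apply_eq_self {v : Fin n} (h : σ v = v) : v ∈ cycleMaxes σ := by
  simp only [cycleMaxes, mem_filter, mem_univ, true_and]
  exact fun w hw => (hw.eq_of_left h).ge

theorem eq_of_mem_cycleMaxes {v w : Fin n} (hv : v ∈ cycleMaxes σ) (hw : w ∈ cycleMaxes σ)
    (h : σ.SameCycle v w) : v = w := by
  simp only [cycleMaxes, mem_filter, mem_univ, true_and] at hv hw
  exact le_antisymm (hw v h.symm) (hv w h)

theorem exists_mem_cycleMaxes_sameCycle (x : Fin n) :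
    ∃ m ∈ cycleMaxes σ, σ.SameCycle x m := by
  set s := univ.filter (σ.SameCycle x)
  have hxm : σ.SameCycle x (s.max' ⟨x, by simp [s, Perm.SameCycle.refl]⟩) :=
    (mem_filter.1 (max'_mem _ _)).2
  refine ⟨_, ?_, hxm⟩
  simp only [cycleMaxes, mem_filter, mem_univ, true_and]
  exact fun w hw => le_max' s w (by simpa [s] using hxm.trans hw)

theorem card_filter_cycleMaxes_apply_ne :
    ((cycleMaxes σ).filter fun v => σ v ≠ v).card = σ.cycleFactorsFinset.card := by
  refine card_bij (fun v _ => σ.cycleOf v) (fun v hv => ?_) (fun v hv w hw h => ?_)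
    (fun c hc => ?_)
  · exact Perm.cycleOf_mem_cycleFactorsFinset_iff.2 (Perm.mem_support.2 (mem_filter.1 hv).2)
  · rw [mem_filter] at hv hw
    exact eq_of_mem_cycleMaxes σ hv.1 hw.1
      ((Perm.sameCycle_iff_cycleOf_eq_of_mem_support (Perm.mem_support.2 hv.2)
        (Perm.mem_support.2 hw.2)).2 h)
  · obtain ⟨x, hx⟩ := (Perm.mem_cycleFactorsFinset_iff.1 hc).1.nonempty_support
    obtain ⟨m, hm, hxm⟩ := exists_mem_cycleMaxes_sameCycle σ x
    have hxσ : x ∈ σ.support := Perm.mem_cycleFactorsFinset_support_le hc hx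
    refine ⟨m, mem_filter.2 ⟨hm, Perm.mem_support.1 (hxm.mem_support_iff.1 hxσ)⟩, ?_⟩
    rw [← hxm.cycleOf_eq, Perm.cycle_is_cycleOf hx hc]

theorem card_cycleMaxes : (cycleMaxes σ).card = numCycles σ := by
  have hfix : (cycleMaxes σ).filter (fun v => σ v = v) = univ.filter fun v => σ v = v := by
    ext v
    simpa using mem_cycleMaxes_of_apply_eq_self σ
  have hcycles : σ.cycleType.card = σ.cycleFactorsFinset.card := by
    rw [Perm.cycleType_def, Multiset.card_map, card_val]
  rw [numCycles, ← card_filter_add_card_filter_not (s := cycleMaxes σ) (fun v => σ v = v), hfix,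
    card_filter_cycleMaxes_apply_ne, hcycles, add_comm]

end CycleMaxes

theorem stmt15_general (n : ℕ) :
    (∀ k : ℕ,
      (Finset.univ.filter fun π : Equiv.Perm (Fin n) => (lrMax π).card = k).card =
      (Finset.univ.filter fun σ : Equiv.Perm (Fin n) => numCycles σ = k).card) ∧
    ∃ χ : Equiv.Perm (Fin n) → Equiv.Perm (Fin n), Function.Bijective χ ∧
      ∀ π : Equiv.Perm (Fin n),
        lrMax π = cycleMaxes (χ π) ∧
        RT π = weakDefPos (χ π) ∧
        RB π = weakDefVals (χ π) := by
  have hchi : Bijective (chi : Perm (Fin n) → Perm (Fin n)) := chi_injective.bijective_of_finite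
  refine ⟨fun k => card_equiv (Equiv.ofBijective chi hchi) fun π => ?_, chi, hchi,
    fun π => ⟨lrMax_eq_cycleMaxes_chi, weakDefPos_chi.symm, weakDefVals_chi.symm⟩⟩
  simp [lrMax_eq_cycleMaxes_chi, card_cycleMaxes]

/-- the number of left-to-right maxima is equidistributed with the
number of cycles; moreover a bijection `χ` exists sending left-to-right maxima to
cycle maxima, run tops to weak deficiency positions, and run bottoms to weak
deficiency values. -/
theorem stmt15 (n : ℕ) (hn : 0 < n) :
    (∀ k : ℕ,
      (Finset.univ.filter fun π : Equiv.Perm (Fin n) => (lrMax π).card = k).card =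
      (Finset.univ.filter fun σ : Equiv.Perm (Fin n) => numCycles σ = k).card) ∧
    ∃ χ : Equiv.Perm (Fin n) → Equiv.Perm (Fin n), Function.Bijective χ ∧
      ∀ π : Equiv.Perm (Fin n),
        lrMax π = cycleMaxes (χ π) ∧
        RT π = weakDefPos (χ π) ∧
        RB π = weakDefVals (χ π) :=
  stmt15_general n
end
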